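/- arXiv:1505.03006 — 2 statements merged into one kernel-verified Lean document; each statement's English description precedes it below -/
import Mathlib

section
/- Let T : ℝ₊^N → ℝ₊₊^N be a positive concave mapping with a fixed point (there exists x ∈ ℝ₊^N with T(x) = x), and let M be its lower bounding matrix. Then the matrix I − M is invertible and its inverse (I − M)⁻¹ is a nonnegative matrix (all entries are ≥ 0). -/
open Matrix Filter Topology

noncomputable section

/-- `g` is a supergradient of `f` at `x`: the supergradient inequality holds for all
points `y` in the nonnegative orthant. -/
def IsSupergrad {N : ℕ} (f : (Fin N → ℝ) → ℝ) (x g : Fin N → ℝ) : Prop :=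
  ∀ y : Fin N → ℝ, 0 ≤ y → f y ≤ f x + ∑ i, g i * (y i - x i)

/-- `M` is the lower bounding matrix of the positive concave mapping with components `f i`:
`M i k` is the infimum of the `k`-th components of all supergradients of `f i` at points of
the nonnegative orthant. -/
def IsLBM {N : ℕ} (f : Fin N → (Fin N → ℝ) → ℝ) (M : Matrix (Fin N) (Fin N) ℝ) : Prop :=
  ∀ i k, M i k =
    sInf {t : ℝ | ∃ x : Fin N → ℝ, 0 ≤ x ∧ ∃ g : Fin N → ℝ, IsSupergrad (f i) x g ∧ g k = t}

/-- The spectral radius of a real matrix: the supremum of the moduli of its complex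
eigenvalues. -/
def specRad {N : ℕ} (M : Matrix (Fin N) (Fin N) ℝ) : ENNReal :=
  spectralRadius ℂ (M.map (algebraMap ℝ ℂ))

/-! A fixed point `x` of `T` is strictly positive, being a value of `T`. A supergradient `g` of
`f i` at the interior point `x` exists by separating `(x, f i x)` from the interior of the hypograph.
Since `f i > 0` on the orthant, every supergradient is nonnegative, so the infimum `M i` is
nonnegative and dominated by `g`; the supergradient inequality at `0` then gives
`(M x) i ≤ g ⬝ᵥ x ≤ f i x - f i 0 < x i`. For a nonnegative `M` and a positive `x` with `M x < x`,
`(1 - M) u ≥ 0` forces `u ≥ 0`: at an index minimizing `u j / x j` a negative minimum would be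
pushed strictly lower. Applied to the kernel of `1 - M` and to the columns of `(1 - M)⁻¹` this
gives invertibility and nonnegativity. -/

section Hypograph

variable {E : Type*} [TopologicalSpace E] [AddCommGroup E] [Module ℝ E]
  [IsTopologicalAddGroup E] [ContinuousSMul ℝ E] {s : Set E} {f : E → ℝ} {x : E} {t : ℝ}

theorem ConcaveOn.exists_separating_hypograph (hf : ConcaveOn ℝ s f)
    (hxt : (x, t) ∈ interior {p : E × ℝ | p.1 ∈ s ∧ p.2 ≤ f p.1}) :
    ∃ φ : StrongDual ℝ (E × ℝ), φ (x, t) < φ (x, f x) ∧ ∀ y ∈ s, φ (y, f y) ≤ φ (x, f x) := by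
  set K := {p : E × ℝ | p.1 ∈ s ∧ p.2 ≤ f p.1}
  have hK : Convex ℝ K := hf.convex_hypograph
  have hgraph : (x, f x) ∉ interior K := by
    intro h
    obtain ⟨r, hr, hrK⟩ := Eventually.exists_gt <|
      (Continuous.prodMk_right x).continuousAt.preimage_mem_nhds (mem_interior_iff_mem_nhds.mp h)
    exact hr.not_ge hrK.2
  obtain ⟨φ, hφ⟩ := geometric_hahn_banach_open_point hK.interior isOpen_interior hgraph
  refine ⟨φ, hφ _ hxt, fun y hy => ?_⟩
  refine closure_minimal (fun c hc => (hφ c hc).le)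
    (isClosed_le φ.continuous continuous_const) ?_
  rw [hK.closure_interior_eq_closure_of_nonempty_interior ⟨_, hxt⟩]
  exact subset_closure ⟨hy, le_rfl⟩

theorem ConcaveOn.exists_supergradient (hf : ConcaveOn ℝ s f)
    (hxt : (x, t) ∈ interior {p : E × ℝ | p.1 ∈ s ∧ p.2 ≤ f p.1}) :
    ∃ ℓ : StrongDual ℝ E, ∀ y ∈ s, f y ≤ f x + ℓ (y - x) := by
  obtain ⟨φ, hφx, hφ⟩ := hf.exists_separating_hypograph hxt
  set b := φ (0, 1)
  have hφ_split : ∀ y r, φ (y, r) = φ (y, 0) + r * b := by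
    intro y r
    rw [← smul_eq_mul, ← map_smul, ← map_add, Prod.smul_mk, Prod.mk_add_mk]
    simp
  -- `(x, t)` lies below `(x, f x)` and is separated from it strictly, so `φ` is not vertical.
  have hb : 0 < b := by
    have hle : t ≤ f x := (interior_subset hxt : (x, t) ∈ _).2
    rw [hφ_split x t, hφ_split x (f x)] at hφx
    nlinarith
  refine ⟨-b⁻¹ • φ.comp (ContinuousLinearMap.inl ℝ E ℝ), fun y hy => ?_⟩
  have hℓ : (-b⁻¹ • φ.comp (ContinuousLinearMap.inl ℝ E ℝ)) (y - x)
      = (φ (x, 0) - φ (y, 0)) / b := by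
    simp only [FunLike.coe_smul, Pi.smul_apply, ContinuousLinearMap.comp_apply,
      ContinuousLinearMap.inl_apply, smul_eq_mul]
    rw [show ((y - x, 0) : E × ℝ) = (y, 0) - (x, 0) by simp, map_sub]
    ring
  have hy := hφ y hy
  rw [hφ_split y, hφ_split x] at hy
  rw [hℓ, ← sub_le_iff_le_add', le_div_iff₀ hb]
  linarith

end Hypograph

section Orthant

variable {N : ℕ}

theorem IsSupergrad.nonneg {f : (Fin N → ℝ) → ℝ} (hf : ∀ y, 0 ≤ y → 0 ≤ f y)
    {z g : Fin N → ℝ} (hz : 0 ≤ z) (hg : IsSupergrad f z g) : 0 ≤ g := by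
  intro k
  by_contra! hk
  change g k < 0 at hk
  set c := (f z + 1) / -g k
  have hc : 0 ≤ c := div_nonneg (by linarith [hf z hz]) (by linarith)
  have hy : 0 ≤ z + Pi.single k c := add_nonneg hz (Pi.single_nonneg.mpr hc)
  have hgc : g k * c = -(f z + 1) := by
    have : g k ≠ 0 := hk.ne
    simp only [c]; field_simp
  have h := hg _ hy
  change f _ ≤ f z + g ⬝ᵥ (z + Pi.single k c - z) at h
  rw [add_sub_cancel_left, dotProduct_single, hgc] at h
  linarith [hf _ hy]

theorem exists_isSupergrad {f : (Fin N → ℝ) → ℝ} (hconc : ConcaveOn ℝ {x | 0 ≤ x} f)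
    (hf : ∀ y, 0 ≤ y → 0 ≤ f y) {x : Fin N → ℝ} (hx : ∀ i, 0 < x i) :
    ∃ g, IsSupergrad f x g := by
  have hint :
      (x, (-1 : ℝ)) ∈ interior {p : (Fin N → ℝ) × ℝ | p.1 ∈ {w | 0 ≤ w} ∧ p.2 ≤ f p.1} := by
    refine interior_mono (s := Set.univ.pi (fun _ => Set.Ioi 0) ×ˢ Set.Iio 0) ?_ ?_
    · rintro ⟨y, r⟩ ⟨hy, hr⟩
      have hy0 : 0 ≤ y := fun i => (hy i trivial).le
      exact ⟨hy0, hr.le.trans (hf y hy0)⟩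
    · rw [((isOpen_set_pi Set.finite_univ fun _ _ => isOpen_Ioi).prod isOpen_Iio).interior_eq]
      exact ⟨fun i _ => hx i, by norm_num⟩
  obtain ⟨ℓ, hℓ⟩ := hconc.exists_supergradient hint
  refine ⟨fun k => ℓ (Pi.single k 1), fun y hy => ?_⟩
  convert hℓ y hy using 2
  rw [show ℓ (y - x) = ℓ.toLinearMap (y - x) from rfl, LinearMap.pi_apply_eq_sum_univ]
  refine Finset.sum_congr rfl fun k _ => ?_
  have hsingle : (fun j => if k = j then (1 : ℝ) else 0) = Pi.single k 1 := by
    ext j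
    simp [Pi.single_apply, eq_comm]
  rw [hsingle, smul_eq_mul, mul_comm, Pi.sub_apply]
  rfl

end Orthant

namespace Matrix

variable {ι R : Type*} [Fintype ι] [DecidableEq ι] [Field R] [LinearOrder R]
  [IsStrictOrderedRing R] {M : Matrix ι ι R} {x : ι → R}

theorem nonneg_of_one_sub_mulVec_nonneg (hM : ∀ i j, 0 ≤ M i j) (hx : ∀ i, 0 < x i)
    (hMx : ∀ i, (M *ᵥ x) i < x i) {u : ι → R} (hu : 0 ≤ (1 - M) *ᵥ u) : 0 ≤ u := by
  intro i
  by_contra! hi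
  obtain ⟨i₀, -, hmin⟩ :=
    Finset.univ.exists_min_image (fun j => u j / x j) ⟨i, Finset.mem_univ _⟩
  set r := u i₀ / x i₀
  have hr : r < 0 := (hmin i (Finset.mem_univ _)).trans_lt (div_neg_of_neg_of_pos hi (hx i))
  have hrx : r • x ≤ u := fun j => (le_div_iff₀ (hx j)).mp (hmin j (Finset.mem_univ j))
  have hMrx : r * (M *ᵥ x) i₀ ≤ (M *ᵥ u) i₀ := by
    rw [← smul_eq_mul, ← Pi.smul_apply, ← mulVec_smul]
    exact dotProduct_le_dotProduct_of_nonneg_left hrx (hM i₀)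
  have hMu : (M *ᵥ u) i₀ ≤ u i₀ := by
    have := hu i₀
    simp only [sub_mulVec, one_mulVec, Pi.sub_apply, Pi.zero_apply] at this
    linarith
  have hu₀ : u i₀ = r * x i₀ := (div_mul_cancel₀ _ (hx i₀).ne').symm
  have := mul_lt_mul_of_neg_left (hMx i₀) hr
  linarith

theorem isUnit_one_sub_of_mulVec_lt (hM : ∀ i j, 0 ≤ M i j) (hx : ∀ i, 0 < x i)
    (hMx : ∀ i, (M *ᵥ x) i < x i) : IsUnit (1 - M) := by
  rw [isUnit_iff_isUnit_det, isUnit_iff_ne_zero]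
  intro hdet
  obtain ⟨v, hv0, hv⟩ := exists_mulVec_eq_zero_iff.mpr hdet
  have hpos := nonneg_of_one_sub_mulVec_nonneg hM hx hMx hv.ge
  have hneg := nonneg_of_one_sub_mulVec_nonneg hM hx hMx (u := -v)
    (by rw [mulVec_neg, hv, neg_zero])
  exact hv0 (le_antisymm (neg_nonneg.mp hneg) hpos)

theorem inv_one_sub_nonneg_of_mulVec_lt (hM : ∀ i j, 0 ≤ M i j) (hx : ∀ i, 0 < x i)
    (hMx : ∀ i, (M *ᵥ x) i < x i) (i k : ι) : 0 ≤ (1 - M)⁻¹ i k := by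
  have hcol : (1 - M) *ᵥ ((1 - M)⁻¹ *ᵥ Pi.single k 1) = Pi.single k 1 := by
    rw [mulVec_mulVec, mul_nonsing_inv _ ((isUnit_iff_isUnit_det _).mp
      (isUnit_one_sub_of_mulVec_lt hM hx hMx)), one_mulVec]
  have := nonneg_of_one_sub_mulVec_nonneg hM hx hMx (hcol ▸ Pi.single_nonneg.mpr zero_le_one) i
  simpa [mulVec_single_one] using this

end Matrix

namespace IsLBM

variable {N : ℕ} {f : Fin N → (Fin N → ℝ) → ℝ} {M : Matrix (Fin N) (Fin N) ℝ}

theorem zero_mem_lowerBounds (hf : ∀ i y, 0 ≤ y → 0 ≤ f i y) (i k : Fin N) :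
    0 ∈ lowerBounds {t : ℝ | ∃ x : Fin N → ℝ, 0 ≤ x ∧ ∃ g, IsSupergrad (f i) x g ∧ g k = t} := by
  rintro _ ⟨z, hz, g, hg, rfl⟩
  exact hg.nonneg (hf i) hz k

theorem nonneg (hM : IsLBM f M) (hf : ∀ i y, 0 ≤ y → 0 ≤ f i y) (i k : Fin N) :
    0 ≤ M i k :=
  hM i k ▸ Real.sInf_nonneg (zero_mem_lowerBounds hf i k)

theorem le_of_isSupergrad (hM : IsLBM f M) (hf : ∀ i y, 0 ≤ y → 0 ≤ f i y) {i : Fin N}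
    {z g : Fin N → ℝ} (hz : 0 ≤ z) (hg : IsSupergrad (f i) z g) : M i ≤ g := fun k =>
  hM i k ▸ csInf_le ⟨0, zero_mem_lowerBounds hf i k⟩ ⟨z, hz, g, hg, rfl⟩

theorem mulVec_apply_le_sub (hM : IsLBM f M) (hconc : ∀ i, ConcaveOn ℝ {x | 0 ≤ x} (f i))
    (hf : ∀ i y, 0 ≤ y → 0 ≤ f i y) {x : Fin N → ℝ} (hx : ∀ i, 0 < x i) (i : Fin N) :
    (M *ᵥ x) i ≤ f i x - f i 0 := by
  obtain ⟨g, hg⟩ := exists_isSupergrad (hconc i) (hf i) hx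
  have h0 := hg 0 le_rfl
  change f i 0 ≤ f i x + g ⬝ᵥ (0 - x) at h0
  rw [zero_sub, dotProduct_neg] at h0
  have hMg : M i ⬝ᵥ x ≤ g ⬝ᵥ x :=
    dotProduct_le_dotProduct_of_nonneg_right (hM.le_of_isSupergrad hf (fun j => (hx j).le) hg)
      fun j => (hx j).le
  change M i ⬝ᵥ x ≤ _
  linarith

end IsLBM

theorem inv_one_sub_lbm_nonneg_of_fixed_point_general {N : ℕ} (f : Fin N → (Fin N → ℝ) → ℝ)
    (hconc : ∀ i, ConcaveOn ℝ {x : Fin N → ℝ | 0 ≤ x} (f i))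
    (hpos : ∀ i, ∀ x : Fin N → ℝ, 0 ≤ x → 0 < f i x)
    (M : Matrix (Fin N) (Fin N) ℝ) (hM : IsLBM f M)
    (x : Fin N → ℝ) (hx : 0 ≤ x) (hfix : (fun i => f i x) = x) :
    IsUnit (1 - M) ∧ ∀ i k, 0 ≤ (1 - M)⁻¹ i k := by
  have hf : ∀ i y, 0 ≤ y → 0 ≤ f i y := fun i y hy => (hpos i y hy).le
  have hx_pos : ∀ i, 0 < x i := fun i => congrFun hfix i ▸ hpos i x hx
  have hMx : ∀ i, (M *ᵥ x) i < x i := fun i => by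
    have := hM.mulVec_apply_le_sub hconc hf hx_pos i
    linarith [congrFun hfix i, hpos i 0 le_rfl]
  exact ⟨Matrix.isUnit_one_sub_of_mulVec_lt (hM.nonneg hf) hx_pos hMx,
    Matrix.inv_one_sub_nonneg_of_mulVec_lt (hM.nonneg hf) hx_pos hMx⟩

/-- If a positive concave mapping has a fixed point, then I − M is invertible and its
inverse is a nonnegative matrix, where M is the lower bounding matrix. -/
theorem inv_one_sub_lbm_nonneg_of_fixed_point {N : ℕ} (f : Fin N → (Fin N → ℝ) → ℝ)
    (hconc : ∀ i, ConcaveOn ℝ {x : Fin N → ℝ | 0 ≤ x} (f i))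
    (husc : ∀ i, UpperSemicontinuousOn (f i) {x : Fin N → ℝ | 0 ≤ x})
    (hpos : ∀ i, ∀ x : Fin N → ℝ, 0 ≤ x → 0 < f i x)
    (M : Matrix (Fin N) (Fin N) ℝ) (hM : IsLBM f M)
    (x : Fin N → ℝ) (hx : 0 ≤ x) (hfix : (fun i => f i x) = x) :
    IsUnit (1 - M) ∧ ∀ i k, 0 ≤ (1 - M)⁻¹ i k :=
  inv_one_sub_lbm_nonneg_of_fixed_point_general f hconc hpos M hM x hx hfix
end
end

section
/- Let T : ℝ₊^N → ℝ₊₊^N be a positive concave mapping whose lower bounding matrix M satisfies ρ(M) < 1, and let T_A(x) := (I − M)⁻¹·(T(x) − M·x) be its accelerated mapping. Let u ∈ ℝ₊^N and define two sequences x′_{n+1} := T(x′_n) and x″_{n+1} := T_A(x″_n) with x′_1 = x″_1 = u. If T(u) ≥ u componentwise, then x″_n ≥ x′_n componentwise for every n; analogously, if T(u) ≤ u componentwise, then x″_n ≤ x′_n componentwise for every n. -/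
/-!
The lower bounding matrix is entrywise nonnegative, because a supergradient of a positive concave
function on the orthant cannot have a negative component; as `ρ(M) < 1`, Gelfand's formula makes
`∑ Mᵏ` converge, so `(I - M)⁻¹ = ∑ Mᵏ` is nonnegative. Concavity gives `T w - T v ≥ M (w - v)` for `0 ≤ v ≤ w`
(supergradients exist in the interior of the orthant, and upper semicontinuity reaches the
boundary); in particular `T` is monotone. Since `T_A x - x = (I - M)⁻¹ (T x - x)` and
`T_A x = T x + M (T_A x - x)`, a point with `x ≤ T x` satisfies `T x ≤ T_A x ≤ T (T_A x)`: the
accelerated iterates stay in `{x ≤ T x}` and dominate `T` of the previous iterate, and induction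
with the monotonicity of `T` compares the two sequences. The case `T u ≤ u` is symmetric, the
iterates staying nonnegative because `T x - M x ≥ T 0 > 0`.
-/

open Matrix Filter Topology

noncomputable section

namespace Matrix

variable {ι : Type*} [Fintype ι]

theorem mulVec_nonneg {A : Matrix ι ι ℝ} (hA : ∀ i j, 0 ≤ A i j) {v : ι → ℝ} (hv : 0 ≤ v) :
    0 ≤ A *ᵥ v :=
  fun i => Finset.sum_nonneg fun j _ => mul_nonneg (hA i j) (hv j)

theorem mulVec_mono {A : Matrix ι ι ℝ} (hA : ∀ i j, 0 ≤ A i j) {v w : ι → ℝ} (hvw : v ≤ w) :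
    A *ᵥ v ≤ A *ᵥ w := by
  simpa [mulVec_sub] using mulVec_nonneg hA (sub_nonneg.mpr hvw)

variable [DecidableEq ι]

theorem inv_one_sub_eq_tsum_pow {M : Matrix ι ι ℝ} (hs : Summable (M ^ ·)) :
    (1 - M)⁻¹ = ∑' n, M ^ n :=
  inv_eq_left_inv hs.tsum_pow_mul_one_sub

theorem isUnit_det_one_sub_of_summable_pow {M : Matrix ι ι ℝ} (hs : Summable (M ^ ·)) :
    IsUnit (1 - M).det :=
  isUnit_det_of_left_inverse hs.tsum_pow_mul_one_sub

theorem inv_one_sub_apply_nonneg {M : Matrix ι ι ℝ} (hM : ∀ i j, 0 ≤ M i j)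
    (hs : Summable (M ^ ·)) (i j : ι) : 0 ≤ (1 - M)⁻¹ i j := by
  rw [inv_one_sub_eq_tsum_pow hs]
  exact (Pi.hasSum.mp (Pi.hasSum.mp hs.hasSum i) j).nonneg fun n => pow_apply_nonneg hM n i j

end Matrix

section SpectralRadius

attribute [local instance] Matrix.linftyOpNormedRing Matrix.linftyOpNormedAlgebra

theorem summable_pow_of_specRad_lt_one {N : ℕ} {M : Matrix (Fin N) (Fin N) ℝ}
    (hrad : specRad M < 1) : Summable (M ^ ·) := by
  obtain ⟨r, hρr, hr1⟩ := ENNReal.lt_iff_exists_nnreal_btwn.mp hrad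
  have hnorm : ∀ n, ‖M.map (algebraMap ℝ ℂ) ^ n‖ = ‖M ^ n‖ := fun n => by
    rw [← Matrix.map_pow, Matrix.linfty_opNorm_def, Matrix.linfty_opNorm_def]
    simp
  have hev : ∀ᶠ n : ℕ in atTop, ‖M ^ n‖ ≤ (r : ℝ) ^ n := by
    filter_upwards [(spectrum.pow_norm_pow_one_div_tendsto_nhds_spectralRadius
      (M.map (algebraMap ℝ ℂ))).eventually_lt_const hρr, eventually_ge_atTop 1] with n hn hn1
    rw [hnorm, ENNReal.ofReal_lt_coe_iff (by positivity), one_div] at hn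
    calc ‖M ^ n‖ = (‖M ^ n‖ ^ (n⁻¹ : ℝ)) ^ n :=
          (Real.rpow_inv_natCast_pow (norm_nonneg _) (by omega)).symm
      _ ≤ (r : ℝ) ^ n := by gcongr
  exact .of_norm_bounded_eventually_nat
    (summable_geometric_of_lt_one r.2 (by exact_mod_cast hr1)) hev

end SpectralRadius

section AcceleratedMap

variable {ι : Type*} [Fintype ι]

def IsIncrementMinorant (T : (ι → ℝ) → ι → ℝ) (M : Matrix ι ι ℝ) : Prop :=
  ∀ v w, 0 ≤ v → v ≤ w → T v + M *ᵥ (w - v) ≤ T w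

variable [DecidableEq ι] in
def acceleratedMap (T : (ι → ℝ) → ι → ℝ) (M : Matrix ι ι ℝ) (x : ι → ℝ) : ι → ℝ :=
  (1 - M)⁻¹ *ᵥ (T x - M *ᵥ x)

variable {T : (ι → ℝ) → ι → ℝ} {M : Matrix ι ι ℝ}

theorem IsIncrementMinorant.monotoneOn (hTM : IsIncrementMinorant T M)
    (hM : ∀ i j, 0 ≤ M i j) : MonotoneOn T {x | 0 ≤ x} := fun v hv w _ hvw =>
  le_trans (le_add_of_nonneg_right (M.mulVec_nonneg hM (sub_nonneg.mpr hvw))) (hTM v w hv hvw)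

variable [DecidableEq ι]

theorem acceleratedMap_sub_self (hdet : IsUnit (1 - M).det) (x : ι → ℝ) :
    acceleratedMap T M x - x = (1 - M)⁻¹ *ᵥ (T x - x) := by
  have hx : (1 - M)⁻¹ *ᵥ ((1 - M) *ᵥ x) = x := by
    rw [mulVec_mulVec, nonsing_inv_mul _ hdet, one_mulVec]
  calc acceleratedMap T M x - x = (1 - M)⁻¹ *ᵥ (T x - M *ᵥ x) - (1 - M)⁻¹ *ᵥ ((1 - M) *ᵥ x) := by
        rw [hx, acceleratedMap]
    _ = (1 - M)⁻¹ *ᵥ (T x - x) := by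
        rw [← mulVec_sub, sub_mulVec, one_mulVec, sub_sub_sub_cancel_right]

theorem acceleratedMap_eq_add (hdet : IsUnit (1 - M).det) (x : ι → ℝ) :
    acceleratedMap T M x = T x + M *ᵥ (acceleratedMap T M x - x) := by
  have h : (1 - M) *ᵥ acceleratedMap T M x = T x - M *ᵥ x := by
    rw [acceleratedMap, mulVec_mulVec, mul_nonsing_inv _ hdet, one_mulVec]
  rw [sub_mulVec, one_mulVec] at h
  rw [mulVec_sub]
  linear_combination h

theorem acceleratedMap_step_of_le_apply (hTM : IsIncrementMinorant T M) (hM : ∀ i j, 0 ≤ M i j)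
    (hA : ∀ i j, 0 ≤ (1 - M)⁻¹ i j) (hdet : IsUnit (1 - M).det) {x : ι → ℝ} (hx : 0 ≤ x)
    (hxT : x ≤ T x) :
    T x ≤ acceleratedMap T M x ∧ acceleratedMap T M x ≤ T (acceleratedMap T M x) := by
  have hinc : 0 ≤ acceleratedMap T M x - x := by
    rw [acceleratedMap_sub_self hdet]
    exact mulVec_nonneg hA (sub_nonneg.mpr hxT)
  constructor
  · rw [acceleratedMap_eq_add hdet]
    exact le_add_of_nonneg_right (mulVec_nonneg hM hinc)
  · conv_lhs => rw [acceleratedMap_eq_add hdet]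
    exact hTM _ _ hx (sub_nonneg.mp hinc)

theorem acceleratedMap_step_of_apply_le (hTM : IsIncrementMinorant T M) (hM : ∀ i j, 0 ≤ M i j)
    (hA : ∀ i j, 0 ≤ (1 - M)⁻¹ i j) (hdet : IsUnit (1 - M).det) (hT0 : 0 ≤ T 0)
    {x : ι → ℝ} (hx : 0 ≤ x) (hTx : T x ≤ x) :
    0 ≤ acceleratedMap T M x ∧ acceleratedMap T M x ≤ T x ∧
      T (acceleratedMap T M x) ≤ acceleratedMap T M x := by
  have hdec : acceleratedMap T M x - x ≤ 0 := by
    rw [acceleratedMap_sub_self hdet]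
    simpa using mulVec_mono hA (sub_nonpos.mpr hTx)
  have hMdec : M *ᵥ (acceleratedMap T M x - x) ≤ 0 := by
    simpa using mulVec_mono hM hdec
  have hnonneg : 0 ≤ acceleratedMap T M x := by
    refine mulVec_nonneg hA (sub_nonneg.mpr ((le_add_of_nonneg_left hT0).trans ?_))
    simpa using hTM 0 x le_rfl hx
  refine ⟨hnonneg, ?_, ?_⟩
  · rw [acceleratedMap_eq_add hdet]
    exact add_le_of_nonpos_right hMdec
  · have h := hTM _ x hnonneg (sub_nonpos.mp hdec)
    rw [← neg_sub, mulVec_neg, add_neg_le_iff_le_add] at h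
    exact h.trans_eq (acceleratedMap_eq_add hdet x).symm

theorem le_acceleratedMap_iterates (hTM : IsIncrementMinorant T M) (hM : ∀ i j, 0 ≤ M i j)
    (hA : ∀ i j, 0 ≤ (1 - M)⁻¹ i j) (hdet : IsUnit (1 - M).det) {u : ι → ℝ} (hu : 0 ≤ u)
    (huT : u ≤ T u) {xp xq : ℕ → ι → ℝ} (hp0 : xp 0 = u) (hp : ∀ n, xp (n + 1) = T (xp n))
    (hq0 : xq 0 = u) (hq : ∀ n, xq (n + 1) = acceleratedMap T M (xq n)) :
    ∀ n, xp n ≤ xq n := by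
  have hmono := hTM.monotoneOn hM
  suffices h : ∀ n, u ≤ xp n ∧ xp n ≤ xq n ∧ xq n ≤ T (xq n) from fun n => (h n).2.1
  intro n
  induction n with
  | zero => rw [hp0, hq0]; exact ⟨le_rfl, le_rfl, huT⟩
  | succ n ih =>
    obtain ⟨hup, hpq, hqT⟩ := ih
    have hp_nonneg : 0 ≤ xp n := hu.trans hup
    have hq_nonneg : 0 ≤ xq n := hp_nonneg.trans hpq
    obtain ⟨hTq, hqT_next⟩ := acceleratedMap_step_of_le_apply hTM hM hA hdet hq_nonneg hqT
    rw [hp, hq]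
    exact ⟨huT.trans (hmono hu hp_nonneg hup), (hmono hp_nonneg hq_nonneg hpq).trans hTq, hqT_next⟩

theorem acceleratedMap_iterates_le (hTM : IsIncrementMinorant T M) (hM : ∀ i j, 0 ≤ M i j)
    (hA : ∀ i j, 0 ≤ (1 - M)⁻¹ i j) (hdet : IsUnit (1 - M).det) (hT0 : 0 ≤ T 0) {u : ι → ℝ}
    (hu : 0 ≤ u) (hTu : T u ≤ u) {xp xq : ℕ → ι → ℝ} (hp0 : xp 0 = u)
    (hp : ∀ n, xp (n + 1) = T (xp n)) (hq0 : xq 0 = u)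
    (hq : ∀ n, xq (n + 1) = acceleratedMap T M (xq n)) :
    ∀ n, xq n ≤ xp n := by
  have hmono := hTM.monotoneOn hM
  suffices h : ∀ n, 0 ≤ xq n ∧ xq n ≤ xp n ∧ T (xq n) ≤ xq n from fun n => (h n).2.1
  intro n
  induction n with
  | zero => rw [hp0, hq0]; exact ⟨hu, le_rfl, hTu⟩
  | succ n ih =>
    obtain ⟨hq_nonneg, hqp, hTq⟩ := ih
    obtain ⟨hq_nonneg_next, hqT, hTq_next⟩ :=
      acceleratedMap_step_of_apply_le hTM hM hA hdet hT0 hq_nonneg hTq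
    rw [hp, hq]
    exact ⟨hq_nonneg_next, hqT.trans (hmono hq_nonneg (hq_nonneg.trans hqp) hqp), hTq_next⟩

end AcceleratedMap

section Supergradient

variable {E : Type*} [NormedAddCommGroup E] [NormedSpace ℝ E] {s : Set E} {φ : E → ℝ} {z : E}
  {c : ℝ}

theorem ConcaveOn.exists_supporting_hyperplane (hφ : ConcaveOn ℝ s φ) (hz : s ∈ 𝓝 z)
    (hc : ∀ y ∈ s, c ≤ φ y) :
    ∃ (L : StrongDual ℝ E) (β : ℝ), 0 < β ∧ ∀ y ∈ s, L y + β * φ y ≤ L z + β * φ z := by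
  set C := {p : E × ℝ | p.1 ∈ s ∧ p.2 ≤ φ p.1}
  have hC : Convex ℝ C := hφ.convex_hypograph
  have hint : (z, c - 1) ∈ interior C :=
    mem_interior_iff_mem_nhds.mpr <|
      mem_of_superset (prod_mem_nhds hz (Iio_mem_nhds (sub_one_lt c)))
        fun p ⟨hp, hpc⟩ => ⟨hp, hpc.le.trans (hc _ hp)⟩
  have hbdry : (z, φ z) ∉ interior C := by
    intro h
    have hlim : Tendsto (fun t : ℝ => (z, φ z + t)) (𝓝[>] 0) (𝓝 (z, φ z)) :=
      ((continuous_const.prodMk (continuous_const.add continuous_id)).tendsto' 0 _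
        (by simp)).mono_left nhdsWithin_le_nhds
    obtain ⟨t, ht, htpos⟩ :=
      ((hlim.eventually (isOpen_interior.mem_nhds h)).and self_mem_nhdsWithin).exists
    linarith [(interior_subset ht).2, show (0 : ℝ) < t from htpos]
  obtain ⟨ℓ, hℓ⟩ := geometric_hahn_banach_open_point hC.interior isOpen_interior hbdry
  have hsplit : ∀ x t, ℓ (x, t) = ℓ.comp (.inl ℝ E ℝ) x + t * ℓ (0, 1) := fun x t => by
    rw [ContinuousLinearMap.comp_apply, ContinuousLinearMap.inl_apply, ← smul_eq_mul, ← map_smul,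
      ← map_add, Prod.smul_mk, smul_zero, smul_eq_mul, mul_one, Prod.mk_add_mk, add_zero, zero_add]
  refine ⟨ℓ.comp (.inl ℝ E ℝ), ℓ (0, 1), ?_, fun y hy => ?_⟩
  · have h := hℓ _ hint
    rw [hsplit z, hsplit z (φ z)] at h
    nlinarith [hc z (mem_of_mem_nhds hz)]
  · have hclosure : C ⊆ closure (interior C) := by
      rw [hC.closure_interior_eq_closure_of_nonempty_interior ⟨_, hint⟩]
      exact subset_closure
    have h : ℓ (y, φ y) ≤ ℓ (z, φ z) := closure_minimal (fun q hq => (hℓ q hq).le)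
      (isClosed_le ℓ.continuous continuous_const) (hclosure ⟨hy, le_rfl⟩)
    rw [hsplit y, hsplit z] at h
    linarith

theorem ConcaveOn.exists_supergradient_s16 (hφ : ConcaveOn ℝ s φ) (hz : s ∈ 𝓝 z)
    (hc : ∀ y ∈ s, c ≤ φ y) : ∃ L : StrongDual ℝ E, ∀ y ∈ s, φ y ≤ φ z + L (y - z) := by
  obtain ⟨L, β, hβ, hL⟩ := hφ.exists_supporting_hyperplane hz hc
  refine ⟨-β⁻¹ • L, fun y hy => ?_⟩
  have h := hL y hy
  rw [FunLike.coe_smul, Pi.smul_apply, smul_eq_mul, map_sub, neg_mul, ← sub_eq_add_neg,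
    le_sub_iff_add_le, inv_mul_eq_div, ← le_sub_iff_add_le', div_le_iff₀ hβ]
  linarith

end Supergradient

section LowerBoundingMatrix

variable {N : ℕ}

theorem IsSupergrad.nonneg_s16 {φ : (Fin N → ℝ) → ℝ} {x g : Fin N → ℝ} {c : ℝ}
    (hφ : ∀ y, 0 ≤ y → c ≤ φ y) (hx : 0 ≤ x) (hg : IsSupergrad φ x g) (k : Fin N) :
    0 ≤ g k := by
  by_contra! hgk
  -- at `x + t • eₖ` the supergradient inequality would push `φ` below its lower bound `c`
  set t := (φ x - c + 1) / -g k
  have ht : 0 < t := div_pos (by linarith [hφ x hx]) (by linarith)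
  have hy : 0 ≤ x + Pi.single k t := add_nonneg hx (Pi.single_nonneg.mpr ht.le)
  have h := hg _ hy
  simp only [Pi.add_apply, Pi.single_apply, add_sub_cancel_left, mul_ite, mul_zero,
    Finset.sum_ite_eq', Finset.mem_univ, ↓reduceIte] at h
  have hgt : g k * t = -(φ x - c + 1) := by
    simp only [t]
    field_simp [hgk.ne]
  linarith [hφ _ hy]

theorem exists_isSupergrad_s16 {φ : (Fin N → ℝ) → ℝ} {z : Fin N → ℝ} {c : ℝ}
    (hφ : ConcaveOn ℝ {x | 0 ≤ x} φ) (hc : ∀ y, 0 ≤ y → c ≤ φ y) (hz : ∀ k, 0 < z k) :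
    ∃ g, IsSupergrad φ z g := by
  have hnhds : {x : Fin N → ℝ | 0 ≤ x} ∈ 𝓝 z :=
    mem_of_superset (set_pi_mem_nhds Set.finite_univ fun k _ => Ici_mem_nhds (hz k))
      fun x hx k => hx k (Set.mem_univ k)
  obtain ⟨L, hL⟩ := hφ.exists_supergradient_s16 hnhds hc
  refine ⟨fun k => L (Pi.single k 1), fun y hy => (hL y hy).trans_eq ?_⟩
  conv_lhs => rw [← Finset.univ_sum_single (y - z)]
  refine congrArg (φ z + ·) ((map_sum L _ _).trans (Finset.sum_congr rfl fun k _ => ?_))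
  rw [mul_comm, ← smul_eq_mul, ← map_smul, ← Pi.single_smul', smul_eq_mul, mul_one, Pi.sub_apply]

variable {f : Fin N → (Fin N → ℝ) → ℝ} {M : Matrix (Fin N) (Fin N) ℝ}

theorem IsLBM.nonneg_s16 (hM : IsLBM f M) (hf : ∀ i x, 0 ≤ x → 0 ≤ f i x) (i k : Fin N) :
    0 ≤ M i k := by
  rw [hM i k]
  exact Real.sInf_nonneg fun _ ⟨_, hx, _, hg, hgk⟩ => hgk ▸ hg.nonneg_s16 (hf i) hx k

theorem IsLBM.le_of_isSupergrad_s16 (hM : IsLBM f M) (hf : ∀ i x, 0 ≤ x → 0 ≤ f i x)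
    {i : Fin N} {x g : Fin N → ℝ} (hx : 0 ≤ x) (hg : IsSupergrad (f i) x g) (k : Fin N) :
    M i k ≤ g k := by
  rw [hM i k]
  exact csInf_le ⟨0, fun _ ⟨_, hx', _, hg', hgk⟩ => hgk ▸ hg'.nonneg_s16 (hf i) hx' k⟩
    ⟨x, hx, g, hg, rfl⟩

theorem IsLBM.add_mulVec_sub_le_of_pos (hM : IsLBM f M) (hconc : ∀ i, ConcaveOn ℝ {x | 0 ≤ x} (f i))
    (hf : ∀ i x, 0 ≤ x → 0 ≤ f i x) {y z : Fin N → ℝ} (hy : 0 ≤ y) (hyz : y ≤ z)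
    (hz : ∀ k, 0 < z k) : (fun i => f i y) + M *ᵥ (z - y) ≤ fun i => f i z := by
  intro i
  obtain ⟨g, hg⟩ := exists_isSupergrad_s16 (hconc i) (hf i) hz
  have hsup := hg y hy
  have hMg : (M *ᵥ (z - y)) i ≤ ∑ k, g k * (z k - y k) := by
    simp only [mulVec, dotProduct, Pi.sub_apply]
    exact Finset.sum_le_sum fun k _ => mul_le_mul_of_nonneg_right
      (hM.le_of_isSupergrad_s16 hf (hy.trans hyz) hg k) (sub_nonneg.mpr (hyz k))
  have hneg : ∑ k, g k * (y k - z k) = -∑ k, g k * (z k - y k) := by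
    rw [← Finset.sum_neg_distrib]
    exact Finset.sum_congr rfl fun k _ => by ring
  simp only [Pi.add_apply]
  linarith

theorem IsLBM.isIncrementMinorant (hM : IsLBM f M) (hconc : ∀ i, ConcaveOn ℝ {x | 0 ≤ x} (f i))
    (husc : ∀ i, UpperSemicontinuousOn (f i) {x | 0 ≤ x}) (hf : ∀ i x, 0 ≤ x → 0 ≤ f i x) :
    IsIncrementMinorant (fun x i => f i x) M := by
  intro y x hy hyx i
  have hx : 0 ≤ x := hy.trans hyx
  have hlim : Tendsto (fun t : ℝ => x + t • 1) (𝓝[>] 0) (𝓝[{x | 0 ≤ x}] x) := by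
    refine tendsto_nhdsWithin_iff.mpr ⟨?_, eventually_nhdsWithin_of_forall fun t ht => ?_⟩
    · exact ((continuous_const.add (continuous_id.smul continuous_const)).tendsto' 0 _
        (by simp)).mono_left nhdsWithin_le_nhds
    · exact add_nonneg hx (smul_nonneg (le_of_lt ht) zero_le_one)
  have hbound : ∀ t ∈ Set.Ioi (0 : ℝ), ((fun i => f i y) + M *ᵥ (x - y)) i ≤ f i (x + t • 1) :=
    fun t (ht : 0 < t) => calc
      _ ≤ ((fun i => f i y) + M *ᵥ (x + t • 1 - y)) i := by
        refine add_le_add le_rfl (mulVec_mono (hM.nonneg_s16 hf) (sub_le_sub_right ?_ _) i)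
        exact le_add_of_nonneg_right (smul_nonneg ht.le zero_le_one)
      _ ≤ f i (x + t • 1) := hM.add_mulVec_sub_le_of_pos hconc hf hy
        (hyx.trans (le_add_of_nonneg_right (smul_nonneg ht.le zero_le_one)))
        (fun k => by simpa using add_pos_of_nonneg_of_pos (hx k) ht) i
  exact UpperSemicontinuousWithinAt.frequently (husc i x hx) _
    (hlim.frequently (eventually_nhdsWithin_of_forall hbound).frequently)

end LowerBoundingMatrix

/-- The accelerated iterates dominate (resp. are dominated by) the standard iterates when
started from a point u with T(u) ≥ u (resp. T(u) ≤ u). -/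
theorem accelerated_iterates_dominate {N : ℕ} (f : Fin N → (Fin N → ℝ) → ℝ)
    (hconc : ∀ i, ConcaveOn ℝ {x : Fin N → ℝ | 0 ≤ x} (f i))
    (husc : ∀ i, UpperSemicontinuousOn (f i) {x : Fin N → ℝ | 0 ≤ x})
    (hpos : ∀ i, ∀ x : Fin N → ℝ, 0 ≤ x → 0 < f i x)
    (M : Matrix (Fin N) (Fin N) ℝ) (hM : IsLBM f M)
    (hrad : specRad M < 1)
    (TA : (Fin N → ℝ) → (Fin N → ℝ))
    (hTA : ∀ x : Fin N → ℝ, TA x = (1 - M)⁻¹ *ᵥ ((fun i => f i x) - M *ᵥ x))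
    (u : Fin N → ℝ) (hu : 0 ≤ u)
    (xp : ℕ → Fin N → ℝ) (hp0 : xp 0 = u) (hprec : ∀ n, xp (n + 1) = fun i => f i (xp n))
    (xq : ℕ → Fin N → ℝ) (hq0 : xq 0 = u) (hqrec : ∀ n, xq (n + 1) = TA (xq n)) :
    ((u ≤ fun i => f i u) → ∀ n, xp n ≤ xq n) ∧
    (((fun i => f i u) ≤ u) → ∀ n, xq n ≤ xp n) := by
  have hf : ∀ i x, 0 ≤ x → 0 ≤ f i x := fun i x hx => (hpos i x hx).le
  have hM0 := hM.nonneg_s16 hf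
  have hsum := summable_pow_of_specRad_lt_one hrad
  have hA := Matrix.inv_one_sub_apply_nonneg hM0 hsum
  have hdet := Matrix.isUnit_det_one_sub_of_summable_pow hsum
  have hTM := hM.isIncrementMinorant hconc husc hf
  have hq : ∀ n, xq (n + 1) = acceleratedMap (fun x i => f i x) M (xq n) :=
    fun n => (hqrec n).trans (hTA _)
  exact ⟨fun huT => le_acceleratedMap_iterates hTM hM0 hA hdet hu huT hp0 hprec hq0 hq,
    fun hTu => acceleratedMap_iterates_le hTM hM0 hA hdet (fun i => hf i 0 le_rfl) hu hTu hp0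
      hprec hq0 hq⟩
end
end
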